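/- Let ρ_L ≥ 0, ρ_R ≥ 0 be real numbers and v_L, v_R ∈ ℝ normal velocities, and let s_L ≥ 0, s_R ≥ 0, s̄ > 0 and v̄ ∈ ℝ. Define the wave speeds σ_L = min(v_L − s_L, v̄ − s̄) and σ_R = max(v̄ + s̄, v_R + s_R). Then σ_L < σ_R, and the HLL intermediate density ρ* = (σ_R·ρ_R − σ_L·ρ_L − (ρ_R·v_R − ρ_L·v_L)) / (σ_R − σ_L) satisfies ρ* ≥ 0. -/

import Mathlib

/-!
The numerator of the HLL density is `ρ_R (σ_R − v_R) + ρ_L (v_L − σ_L)`, and the Einfeldt speeds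
bracket both characteristic velocities, `σ_L ≤ v_L − s_L ≤ v_L` and `v_R ≤ v_R + s_R ≤ σ_R`, so each
term is nonnegative; the denominator is at least `2 s̄ > 0` because `σ_L ≤ v̄ − s̄ < v̄ + s̄ ≤ σ_R`.
-/

theorem hll_density_numerator_eq (ρL ρR vL vR σL σR : ℝ) :
    σR * ρR - σL * ρL - (ρR * vR - ρL * vL) = ρR * (σR - vR) + ρL * (vL - σL) := by
  ring

theorem hll_density_nonneg {ρL ρR vL vR σL σR : ℝ} (hρL : 0 ≤ ρL) (hρR : 0 ≤ ρR)
    (hσL : σL ≤ vL) (hσR : vR ≤ σR) (hσ : σL ≤ σR) :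
    0 ≤ (σR * ρR - σL * ρL - (ρR * vR - ρL * vL)) / (σR - σL) := by
  rw [hll_density_numerator_eq]
  have hR : 0 ≤ ρR * (σR - vR) := mul_nonneg hρR (sub_nonneg.mpr hσR)
  have hL : 0 ≤ ρL * (vL - σL) := mul_nonneg hρL (sub_nonneg.mpr hσL)
  exact div_nonneg (add_nonneg hR hL) (sub_nonneg.mpr hσ)

theorem min_sub_lt_max_add {a b c s : ℝ} (hs : 0 < s) :
    min a (c - s) < max (c + s) b :=
  calc min a (c - s) ≤ c - s := min_le_right _ _
    _ < c + s := by linarith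
    _ ≤ max (c + s) b := le_max_left _ _

/-- Positivity preservation of the HLL intermediate density with the Einfeldt
wave speeds `σ_L = min (v_L − s_L) (v̄ − s̄)`, `σ_R = max (v̄ + s̄) (v_R + s_R)`. -/
theorem stmt_2 (ρL ρR vL vR sL sR sbar vbar : ℝ)
    (hρL : 0 ≤ ρL) (hρR : 0 ≤ ρR) (hsL : 0 ≤ sL) (hsR : 0 ≤ sR) (hsbar : 0 < sbar)
    (σL σR : ℝ)
    (hσL : σL = min (vL - sL) (vbar - sbar))
    (hσR : σR = max (vbar + sbar) (vR + sR)) :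
    σL < σR ∧
    0 ≤ (σR * ρR - σL * ρL - (ρR * vR - ρL * vL)) / (σR - σL) := by
  subst hσL hσR
  have hlt := min_sub_lt_max_add (a := vL - sL) (b := vR + sR) (c := vbar) hsbar
  have hσL_le : min (vL - sL) (vbar - sbar) ≤ vL := (min_le_left _ _).trans (sub_le_self _ hsL)
  have hσR_ge : vR ≤ max (vbar + sbar) (vR + sR) :=
    (le_add_of_nonneg_right hsR).trans (le_max_right _ _)
  exact ⟨hlt, hll_density_nonneg hρL hρR hσL_le hσR_ge hlt.le⟩
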